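/- arXiv:1810.03537 — 7 statements merged into one kernel-verified Lean document; each statement's English description precedes it below -/
import Mathlib

section
/- If a metric space X admits a quasi-isometric embedding into a metric space Y, then the asymptotic dimension of X is at most the asymptotic dimension of Y. -/
/-- `AsdimLEd d n`: the space with distance function `d` has asymptotic dimension
at most `n`: for every `R > 0` there is a cover by sets of diameter uniformly
bounded by some `B` such that every `R`-ball meets at most `n+1` members. -/
def AsdimLEd {X : Type*} (d : X → X → ℝ) (n : ℕ) : Prop :=
  ∀ R : ℝ, 0 < R → ∃ (𝒰 : Set (Set X)) (B : ℝ),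
    (∀ x : X, ∃ u ∈ 𝒰, x ∈ u) ∧
    (∀ u ∈ 𝒰, ∀ x ∈ u, ∀ y ∈ u, d x y ≤ B) ∧
    (∀ x : X, {u | u ∈ 𝒰 ∧ ∃ y ∈ u, d x y < R}.Finite ∧
      {u | u ∈ 𝒰 ∧ ∃ y ∈ u, d x y < R}.ncard ≤ n + 1)

/-- Asymptotic dimension at most `n` of a (pseudo)metric space. -/
def AsdimLE (X : Type*) [PseudoMetricSpace X] (n : ℕ) : Prop :=
  AsdimLEd (fun x y : X => dist x y) n

/-- `f` is an `(L,C)`-quasi-isometric embedding. -/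
def IsQIE {X Y : Type*} [PseudoMetricSpace X] [PseudoMetricSpace Y]
    (f : X → Y) (L C : ℝ) : Prop :=
  ∀ x x' : X, dist x x' / L - C ≤ dist (f x) (f x') ∧
    dist (f x) (f x') ≤ L * dist x x' + C

/-- If a metric space `X` admits a quasi-isometric embedding into a metric space `Y`,
then the asymptotic dimension of `X` is at most the asymptotic dimension of `Y`. -/
theorem asdim_le_of_qie {X Y : Type*} [MetricSpace X] [MetricSpace Y]
    (f : X → Y) (L C : ℝ) (hL : 1 ≤ L) (hC : 0 ≤ C) (hf : IsQIE f L C)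
    (n : ℕ) (hY : AsdimLE Y n) : AsdimLE X n := by
  intro R hR
  obtain ⟨𝒰, B, hcov, hbdd, hmult⟩ := hY (L * R + C + 1) (by positivity)
  have hL0 : (0:ℝ) < L := lt_of_lt_of_le one_pos hL
  refine ⟨(fun u => f ⁻¹' u) '' 𝒰, L * (B + C), ?_, ?_, ?_⟩
  · intro x
    obtain ⟨u, hu, hx⟩ := hcov (f x)
    exact ⟨f ⁻¹' u, ⟨u, hu, rfl⟩, hx⟩
  · rintro v ⟨u, hu, rfl⟩ x hx y hy
    have h1 := (hf x y).1
    have h2 := hbdd u hu (f x) hx (f y) hy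
    have h3 : dist x y / L ≤ B + C := by linarith
    have h4 : dist x y ≤ (B + C) * L := (div_le_iff₀ hL0).1 h3
    linarith [mul_comm (B + C) L]
  · intro x
    have hsub : {v | v ∈ (fun u => f ⁻¹' u) '' 𝒰 ∧ ∃ y ∈ v, dist x y < R} ⊆
        (fun u => f ⁻¹' u) '' {u | u ∈ 𝒰 ∧ ∃ z ∈ u, dist (f x) z < L * R + C + 1} := by
      rintro v ⟨⟨u, hu, rfl⟩, y, hy, hxy⟩
      refine ⟨u, ⟨hu, f y, hy, ?_⟩, rfl⟩
      have h2 := (hf x y).2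
      nlinarith [dist_nonneg (x := x) (y := y)]
    obtain ⟨hfin, hcard⟩ := hmult (f x)
    have h5 := Set.ncard_le_ncard hsub (hfin.image (fun u => f ⁻¹' u))
    exact ⟨(hfin.image _).subset hsub,
      h5.trans ((Set.ncard_image_le hfin).trans hcard)⟩
end

section
/- For metric spaces X and Y, the asymptotic dimension of the product X × Y (with the sup or ℓ¹ product metric) is at most asdim(X) + asdim(Y). -/
/-!
Ostrand-type colorings. If `asdim X ≤ n`, then for every `K` and `r > 0` there are `K + 1`
uniformly bounded `r`-separated families ("colors") such that each point lies in a member of all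
but at most `n` of them: take a cover `𝒰` of multiplicity `≤ n + 1` at scale `(K + 2) r`, and let
color `j` consist of the sets of points `x` whose set of members of `𝒰` within `(j + 1) r` equals
that within `(j + 2) r`, grouped by that set. Along `j = 0, …, K + 1` these sets of members grow at
most `n` times, and two points of different groups of color `j` are `r` apart.

With `K = m + n`, the products of same-colored pieces of `X` and `Y` form `m + n + 1` uniformly
bounded `r`-separated families covering `X × Y`, each point being missed by at most `m + n` of
them. For `r ≥ 2R` an `R`-ball meets at most one member per color, so their union witnesses
`asdim (X × Y) ≤ m + n`.
-/

open Metric Set Finset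

section Families

variable {X : Type*} [PseudoMetricSpace X]

def UniformlyBounded (B : ℝ) (𝒰 : Set (Set X)) : Prop :=
  ∀ u ∈ 𝒰, ∀ x ∈ u, ∀ y ∈ u, dist x y ≤ B

def PairwiseSeparated (r : ℝ) (𝒰 : Set (Set X)) : Prop :=
  𝒰.Pairwise fun u v => ∀ x ∈ u, ∀ y ∈ v, r ≤ dist x y

def nearMembers (𝒰 : Set (Set X)) (x : X) (R : ℝ) : Set (Set X) :=
  {u | u ∈ 𝒰 ∧ ∃ y ∈ u, dist x y < R}

lemma UniformlyBounded.mono {B B' : ℝ} {𝒰 : Set (Set X)} (h : UniformlyBounded B 𝒰)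
    (hB : B ≤ B') : UniformlyBounded B' 𝒰 :=
  fun u hu x hx y hy => (h u hu x hx y hy).trans hB

lemma PairwiseSeparated.subsingleton_nearMembers {R : ℝ} {𝒰 : Set (Set X)}
    (h : PairwiseSeparated (2 * R) 𝒰) (x : X) : (nearMembers 𝒰 x R).Subsingleton := by
  rintro u ⟨hu, y, hy, hxy⟩ v ⟨hv, z, hz, hxz⟩
  by_contra hne
  have := h hu hv hne y hy z hz
  linarith [dist_triangle_left y z x]

lemma UniformlyBounded.image2_prod {Y : Type*} [PseudoMetricSpace Y] {B B' : ℝ}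
    {𝒰 : Set (Set X)} {𝒱 : Set (Set Y)} (hU : UniformlyBounded B 𝒰)
    (hV : UniformlyBounded B' 𝒱) :
    UniformlyBounded (max B B') (image2 (· ×ˢ ·) 𝒰 𝒱) := by
  rintro _ ⟨u, hu, v, hv, rfl⟩ p hp q hq
  exact max_le_max (hU u hu _ hp.1 _ hq.1) (hV v hv _ hp.2 _ hq.2)

lemma PairwiseSeparated.image2_prod {Y : Type*} [PseudoMetricSpace Y] {r : ℝ}
    {𝒰 : Set (Set X)} {𝒱 : Set (Set Y)} (hU : PairwiseSeparated r 𝒰)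
    (hV : PairwiseSeparated r 𝒱) :
    PairwiseSeparated r (image2 (· ×ˢ ·) 𝒰 𝒱) := by
  rintro _ ⟨u, hu, v, hv, rfl⟩ _ ⟨u', hu', v', hv', rfl⟩ hne p hp q hq
  by_cases huu : u = u'
  · subst huu
    have hvv : v ≠ v' := by rintro rfl; exact hne rfl
    exact (hV hv hv' hvv _ hp.2 _ hq.2).trans (le_max_right _ _)
  · exact (hU hu hu' huu _ hp.1 _ hq.1).trans (le_max_left _ _)

end Families

def HasColoredCover (X : Type*) [PseudoMetricSpace X] (ι : Type*) [Fintype ι] (r : ℝ)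
    (n : ℕ) : Prop :=
  ∃ (F : ι → Set (Set X)) (B : ℝ), (∀ i, UniformlyBounded B (F i)) ∧
    (∀ i, PairwiseSeparated r (F i)) ∧
    ∀ x, ∃ J : Finset ι, (∀ i ∈ J, x ∈ ⋃₀ F i) ∧ Fintype.card ι ≤ #J + n

lemma HasColoredCover.prod {X Y ι : Type*} [PseudoMetricSpace X] [PseudoMetricSpace Y]
    [Fintype ι] {r : ℝ} {m n : ℕ} (hX : HasColoredCover X ι r m)
    (hY : HasColoredCover Y ι r n) : HasColoredCover (X × Y) ι r (m + n) := by
  classical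
  obtain ⟨F, BX, hFb, hFs, hFc⟩ := hX
  obtain ⟨G, BY, hGb, hGs, hGc⟩ := hY
  refine ⟨fun i => image2 (· ×ˢ ·) (F i) (G i), max BX BY,
    fun i => (hFb i).image2_prod (hGb i), fun i => (hFs i).image2_prod (hGs i), fun p => ?_⟩
  obtain ⟨JX, hJX, hcardX⟩ := hFc p.1
  obtain ⟨JY, hJY, hcardY⟩ := hGc p.2
  refine ⟨JX ∩ JY, fun i hi => ?_, ?_⟩
  · obtain ⟨u, hu, hpu⟩ := hJX i (Finset.mem_inter.1 hi).1
    obtain ⟨v, hv, hpv⟩ := hJY i (Finset.mem_inter.1 hi).2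
    exact ⟨u ×ˢ v, mem_image2_of_mem hu hv, hpu, hpv⟩
  · have := card_union_add_card_inter JX JY
    have := card_le_univ (JX ∪ JY)
    omega

lemma asdimLE_of_hasColoredCover {X ι : Type*} [PseudoMetricSpace X] [Fintype ι] {n : ℕ}
    (hι : Fintype.card ι = n + 1) (h : ∀ R > 0, HasColoredCover X ι (2 * R) n) :
    AsdimLE X n := by
  intro R hR
  obtain ⟨F, B, hFb, hFs, hFc⟩ := h R hR
  have hnear : ∀ x, nearMembers (⋃ i, F i) x R = ⋃ i, nearMembers (F i) x R := fun x => by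
    ext u; simp [nearMembers]
  refine ⟨⋃ i, F i, B, fun x => ?_, fun u hu => ?_, fun x => ?_⟩
  · obtain ⟨J, hJ, hcard⟩ := hFc x
    obtain ⟨i, hi⟩ := Finset.card_pos.1 (by omega : 0 < #J)
    obtain ⟨u, hu, hxu⟩ := hJ i hi
    exact ⟨u, mem_iUnion_of_mem i hu, hxu⟩
  · obtain ⟨i, hi⟩ := mem_iUnion.1 hu
    exact hFb i u hi
  · have hsub : ∀ i, (nearMembers (F i) x R).Subsingleton :=
      fun i => (hFs i).subsingleton_nearMembers x
    change (nearMembers _ x R).Finite ∧ (nearMembers _ x R).ncard ≤ n + 1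
    rw [hnear]
    refine ⟨finite_iUnion fun i => (hsub i).finite, ?_⟩
    calc (⋃ i, nearMembers (F i) x R).ncard ≤ ∑ i, (nearMembers (F i) x R).ncard :=
          ncard_iUnion_le_of_fintype _
      _ ≤ ∑ _i : ι, 1 := Finset.sum_le_sum fun i _ => (ncard_le_one (hsub i).finite).2 (hsub i)
      _ = n + 1 := by simp [hι]

theorem Monotone.card_filter_ne_succ_add_ncard_le {α : Type*} {S : ℕ → Set α}
    (hS : Monotone S) {N : ℕ} (hN : (S N).Finite) :
    #{j ∈ range N | S j ≠ S (j + 1)} + (S 0).ncard ≤ (S N).ncard := by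
  induction N with
  | zero => simp
  | succ N ih =>
    have hstep := hS N.le_succ
    have ih := ih (hN.subset hstep)
    rw [range_add_one, filter_insert]
    split_ifs with hne
    · rw [card_insert_of_notMem (by simp)]
      have : (S N).ncard < (S (N + 1)).ncard :=
        ncard_lt_ncard (ssubset_of_subset_of_ne hstep hne) hN
      omega
    · exact ih.trans (ncard_le_ncard hstep hN)

section Ostrand

variable {X : Type*} [PseudoMetricSpace X] (𝒰 : Set (Set X)) (r : ℝ)

def nearLayer (x : X) (j : ℕ) : Set (Set X) :=
  nearMembers 𝒰 x ((j + 1) * r)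

def stablePiece (j : ℕ) (σ : Set (Set X)) : Set X :=
  {x | nearLayer 𝒰 r x j = σ ∧ nearLayer 𝒰 r x (j + 1) = σ}

variable {𝒰 r}

lemma nearLayer_mono (hr : 0 ≤ r) (x : X) : Monotone (nearLayer 𝒰 r x) := by
  rintro j k hjk u ⟨hu, y, hy, hxy⟩
  refine ⟨hu, y, hy, hxy.trans_le ?_⟩
  gcongr

lemma le_dist_of_mem_nearLayer_of_notMem {a b : X} {u : Set X} {j : ℕ}
    (ha : u ∈ nearLayer 𝒰 r a j) (hb : u ∉ nearLayer 𝒰 r b (j + 1)) : r ≤ dist a b := by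
  obtain ⟨hu, y, hy, hay⟩ := ha
  have hby : ((j + 1 : ℕ) + 1) * r ≤ dist b y := not_lt.1 fun h => hb ⟨hu, y, hy, h⟩
  push_cast at hby
  linarith [dist_triangle b a y, dist_comm a b]

lemma uniformlyBounded_stablePiece {B : ℝ} (hcov : ∀ x, ∃ u ∈ 𝒰, x ∈ u)
    (hB : UniformlyBounded B 𝒰) (hr : 0 < r) (j : ℕ) :
    UniformlyBounded (B + (j + 1) * r) (range (stablePiece 𝒰 r j)) := by
  rintro _ ⟨σ, rfl⟩ x hx y hy
  obtain ⟨u, hu, hxu⟩ := hcov x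
  have hux : u ∈ nearLayer 𝒰 r x j := ⟨hu, x, hxu, by rw [dist_self]; positivity⟩
  obtain ⟨-, q, hqu, hyq⟩ : u ∈ nearLayer 𝒰 r y j := hy.1 ▸ hx.1 ▸ hux
  linarith [dist_triangle_right x y q, hB u hu x hxu q hqu]

lemma pairwiseSeparated_stablePiece (j : ℕ) :
    PairwiseSeparated r (range (stablePiece 𝒰 r j)) := by
  have key : ∀ {a b : X} {σ τ : Set (Set X)}, a ∈ stablePiece 𝒰 r j σ →
      b ∈ stablePiece 𝒰 r j τ → ¬σ ⊆ τ → r ≤ dist a b := by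
    intro a b σ τ ha hb hστ
    obtain ⟨u, huσ, huτ⟩ := not_subset.1 hστ
    exact le_dist_of_mem_nearLayer_of_notMem (ha.1 ▸ huσ) (hb.2 ▸ huτ)
  rintro _ ⟨σ, rfl⟩ _ ⟨τ, rfl⟩ hne a ha b hb
  by_cases hστ : σ ⊆ τ
  · rw [dist_comm]
    exact key hb ha fun hτσ => hne (congrArg _ (hστ.antisymm hτσ))
  · exact key ha hb hστ

lemma card_filter_nearLayer_ne_le {n K : ℕ} (hcov : ∀ x, ∃ u ∈ 𝒰, x ∈ u) (hr : 0 < r) (x : X)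
    (hmult : (nearLayer 𝒰 r x (K + 1)).Finite ∧ (nearLayer 𝒰 r x (K + 1)).ncard ≤ n + 1) :
    #{j ∈ range (K + 1) | nearLayer 𝒰 r x j ≠ nearLayer 𝒰 r x (j + 1)} ≤ n := by
  have hchain := (nearLayer_mono hr.le x).card_filter_ne_succ_add_ncard_le hmult.1
  obtain ⟨u, hu, hxu⟩ := hcov x
  have h0 : 0 < (nearLayer 𝒰 r x 0).ncard :=
    (ncard_pos (hmult.1.subset ((nearLayer_mono hr.le x) (Nat.zero_le _)))).2
      ⟨u, hu, x, hxu, by rw [dist_self]; positivity⟩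
  omega

end Ostrand

lemma AsdimLE.hasColoredCover {X : Type*} [PseudoMetricSpace X] {n : ℕ} (h : AsdimLE X n)
    (K : ℕ) {r : ℝ} (hr : 0 < r) : HasColoredCover X (Fin (K + 1)) r n := by
  classical
  obtain ⟨𝒰, B, hcov, hB, hmult⟩ := h (((K + 1 : ℕ) + 1) * r) (by positivity)
  refine ⟨fun j => range (stablePiece 𝒰 r j), B + (K + 1) * r,
    fun j => (uniformlyBounded_stablePiece hcov hB hr j).mono ?_,
    fun j => pairwiseSeparated_stablePiece j, fun x => ?_⟩
  · have : (j : ℝ) ≤ K := by exact_mod_cast Nat.lt_succ_iff.1 j.isLt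
    gcongr
  have hbad := card_filter_nearLayer_ne_le hcov hr x (hmult x)
  set L := nearLayer 𝒰 r x
  refine ⟨{j ∈ range (K + 1) | L j = L (j + 1)}.attachFin fun j hj => by simp_all,
    fun j hj => ?_, ?_⟩
  · have hj : L j = L (j + 1) := (Finset.mem_filter.1 (mem_attachFin _ |>.1 hj)).2
    exact ⟨_, mem_range_self (L j), rfl, hj.symm⟩
  · have := card_filter_add_card_filter_not (s := range (K + 1)) fun j => L j = L (j + 1)
    rw [Fintype.card_fin, card_attachFin]
    simp only [card_range, ne_eq] at this hbad
    omega

/-- The asymptotic dimension of a product (with the sup product metric) is at most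
the sum of the asymptotic dimensions of the factors. -/
theorem asdim_prod {X Y : Type*} [MetricSpace X] [MetricSpace Y]
    (m n : ℕ) (hX : AsdimLE X m) (hY : AsdimLE Y n) : AsdimLE (X × Y) (m + n) :=
  asdimLE_of_hasColoredCover (Fintype.card_fin _) fun _R hR =>
    (hX.hasColoredCover (m + n) (by positivity)).prod (hY.hasColoredCover (m + n) (by positivity))
end

section
/- If a metric space X admits a quasi-isometric embedding into a product Y × Z of metric spaces, then asdim(X) ≤ asdim(Y) + asdim(Z). -/
open Function Metric Set

theorem exists_disjoint_of_ncard_lt {α ι : Type*} [Finite ι] {S : Set α} (hS : S.Finite)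
    {I : ι → Set α} (hI : Pairwise (Disjoint on I)) (hcard : S.ncard < Nat.card ι) :
    ∃ i, Disjoint S (I i) := by
  by_contra! h
  simp only [not_disjoint_iff] at h
  choose s hsS hsI using h
  have hinj : Injective fun i => (⟨s i, hsS i⟩ : S) := fun i j hij => by
    have hsij : s i = s j := congrArg Subtype.val hij
    exact hI.eq (not_disjoint_iff.2 ⟨s i, hsI i, hsij ▸ hsI j⟩)
  have := hS.to_subtype
  have := Nat.card_le_card_of_injective _ hinj
  rw [Nat.card_coe_set_eq] at this
  omega

theorem pairwise_disjoint_Ioc_natCast_mul {N : ℕ} {g : ℝ} (hg : 0 ≤ g) :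
    Pairwise (Disjoint on fun k : Fin N => Ioc ((k : ℕ) * g) ((k : ℕ) * g + g)) := by
  intro j k hjk
  wlog hlt : j < k generalizing j k
  · exact (this hjk.symm ((Ne.symm hjk).lt_of_le (not_lt.1 hlt))).symm
  have : ((j : ℕ) + 1 : ℝ) ≤ (k : ℕ) := by exact_mod_cast hlt
  refine disjoint_left.2 fun t ht ht' => ?_
  nlinarith [ht.2, ht'.1]

theorem asdimLE_of_colorings {X : Type*} [PseudoMetricSpace X] {n : ℕ}
    (h : ∀ R > 0, ∃ (𝒲 : Fin (n + 1) → Set (Set X)) (B : ℝ),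
      (∀ x, ∃ j, ∃ u ∈ 𝒲 j, x ∈ u) ∧
      (∀ j, ∀ u ∈ 𝒲 j, ∀ x ∈ u, ∀ y ∈ u, dist x y ≤ B) ∧
      (∀ j, ∀ u ∈ 𝒲 j, ∀ u' ∈ 𝒲 j, u ≠ u' → ∀ x ∈ u, ∀ y ∈ u', 2 * R ≤ dist x y)) :
    AsdimLE X n := by
  intro R hR
  obtain ⟨𝒲, B, hcov, hbdd, hsep⟩ := h R hR
  refine ⟨⋃ j, 𝒲 j, B, fun x => ?_, fun u hu => ?_, fun q => ?_⟩
  · obtain ⟨j, u, hu, hx⟩ := hcov x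
    exact ⟨u, mem_iUnion.2 ⟨j, hu⟩, hx⟩
  · obtain ⟨j, hj⟩ := mem_iUnion.1 hu
    exact hbdd j u hj
  · have hcolor : ∀ u, ∃ j, u ∈ ⋃ j, 𝒲 j → u ∈ 𝒲 j := fun u => by
      by_cases hu : u ∈ ⋃ j, 𝒲 j
      · exact (mem_iUnion.1 hu).imp fun _ hj _ => hj
      · exact ⟨0, fun h => absurd h hu⟩
    choose color hcolor using hcolor
    have hinj : InjOn color {u | u ∈ ⋃ j, 𝒲 j ∧ ∃ y ∈ u, dist q y < R} := by
      rintro u ⟨hu, p, hp, hqp⟩ u' ⟨hu', p', hp', hqp'⟩ hcol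
      by_contra hne
      have := hsep _ u (hcolor u hu) u' (hcol ▸ hcolor u' hu') hne p hp p' hp'
      linarith [dist_triangle_left p p' q]
    refine ⟨Finite.of_injOn (mapsTo_univ _ _) hinj finite_univ, ?_⟩
    calc _ = (color '' _).ncard := hinj.ncard_image.symm
      _ ≤ Nat.card (Fin (n + 1)) := ncard_le_card _
      _ = n + 1 := Nat.card_fin _

section Plateau

variable {Y : Type*} [PseudoMetricSpace Y] {a B : ℝ} {s : Set Y} {y y' : Y}

noncomputable def plateau (a : ℝ) (s : Set Y) (y : Y) : ℝ := max (a - infDist y s) 0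

theorem lipschitzWith_plateau (a : ℝ) (s : Set Y) : LipschitzWith 1 (plateau a s) := by
  show LipschitzWith 1 fun y => max (a - infDist y s) 0
  simpa using ((LipschitzWith.const a).sub (lipschitz_infDist_pt s)).max_const 0

theorem plateau_of_mem (ha : 0 ≤ a) (hy : y ∈ s) : plateau a s y = a := by
  simp [plateau, infDist_zero_of_mem hy, ha]

theorem plateau_empty (ha : 0 ≤ a) (y : Y) : plateau a ∅ y = a := by
  simp [plateau, ha]

theorem exists_dist_lt_of_plateau_pos (hs : s.Nonempty) (hy : 0 < plateau a s y) :
    ∃ p ∈ s, dist y p < a :=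
  (infDist_lt_iff hs).1 <| by simp only [plateau, lt_max_iff, lt_irrefl, or_false] at hy; linarith

theorem dist_le_of_plateau_pos (hs : s.Nonempty) (hB : ∀ p ∈ s, ∀ p' ∈ s, dist p p' ≤ B)
    (hy : 0 < plateau a s y) (hy' : 0 < plateau a s y') : dist y y' ≤ B + 2 * a := by
  obtain ⟨p, hp, hyp⟩ := exists_dist_lt_of_plateau_pos hs hy
  obtain ⟨p', hp', hyp'⟩ := exists_dist_lt_of_plateau_pos hs hy'
  linarith [dist_triangle4 y p p' y', dist_comm y' p', hB p hp p' hp']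

theorem plateau_image_inter_Ioo_finite_ncard_le {𝒰 : Set (Set Y)} {m : ℕ} (ha : 0 < a)
    {u₀ : Set Y} (hu₀ : u₀ ∈ 𝒰) (hy : y ∈ u₀)
    (hmult : {u | u ∈ 𝒰 ∧ ∃ p ∈ u, dist y p < a}.Finite ∧
      {u | u ∈ 𝒰 ∧ ∃ p ∈ u, dist y p < a}.ncard ≤ m + 1) :
    ((plateau a · y) '' 𝒰 ∩ Ioo 0 a).Finite ∧ ((plateau a · y) '' 𝒰 ∩ Ioo 0 a).ncard ≤ m := by
  set near := {u | u ∈ 𝒰 ∧ ∃ p ∈ u, dist y p < a}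
  obtain ⟨hfin, hcard⟩ := hmult
  have hsub : (plateau a · y) '' 𝒰 ∩ Ioo 0 a ⊆ (plateau a · y) '' (near \ {u₀}) := by
    rintro _ ⟨⟨u, hu, rfl⟩, hpos, hlt⟩
    have hne : u.Nonempty := nonempty_iff_ne_empty.2 fun he => by
      simp [he, plateau_empty ha.le] at hlt
    refine ⟨u, ⟨⟨hu, exists_dist_lt_of_plateau_pos hne hpos⟩, ?_⟩, rfl⟩
    rintro rfl
    simp [plateau_of_mem ha.le hy] at hlt
  have hu₀near : u₀ ∈ near := ⟨hu₀, y, hy, by simpa using ha⟩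
  refine ⟨(hfin.sdiff.image _).subset hsub, ?_⟩
  calc _ ≤ ((plateau a · y) '' (near \ {u₀})).ncard := ncard_le_ncard hsub (hfin.sdiff.image _)
    _ ≤ (near \ {u₀}).ncard := ncard_image_le hfin.sdiff
    _ ≤ m := by rw [ncard_sdiff_singleton_of_mem hu₀near]; omega

end Plateau

section LevelPiece

variable {X ι : Type*} {θ : ι → X → ℝ} {P σ σ' : Set ι} {c g : ℝ} {x y : X}

def levelPiece (θ : ι → X → ℝ) (P σ : Set ι) (c g : ℝ) : Set X :=
  {x | (∀ i ∈ σ, c + g < θ i x) ∧ ∀ i ∈ P \ σ, θ i x ≤ c}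

theorem lt_dist_of_mem_levelPiece [PseudoMetricSpace X] (hθ : ∀ i, LipschitzWith 1 (θ i))
    (hσ : σ ⊆ P) (hσ' : σ' ⊆ P) (hne : σ ≠ σ') (hx : x ∈ levelPiece θ P σ c g)
    (hy : y ∈ levelPiece θ P σ' c g) : g < dist x y := by
  obtain ⟨i, hi⟩ : ∃ i, ¬(i ∈ σ ↔ i ∈ σ') := by
    by_contra! h
    exact hne (Set.ext h)
  by_cases hiσ : i ∈ σ
  · have hiσ' : i ∉ σ' := fun h => hi (iff_of_true hiσ h)
    have := (hθ i).le_add_mul x y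
    rw [NNReal.coe_one, one_mul] at this
    linarith [hx.1 i hiσ, hy.2 i ⟨hσ hiσ, hiσ'⟩]
  · have hiσ' : i ∈ σ' := by tauto
    have := (hθ i).le_add_mul y x
    rw [NNReal.coe_one, one_mul] at this
    linarith [hy.1 i hiσ', hx.2 i ⟨hσ' hiσ', hiσ⟩, dist_comm x y]

theorem mem_levelPiece (h : ∀ i ∈ P, θ i x ∉ Ioc c (c + g)) :
    x ∈ levelPiece θ P {i | i ∈ P ∧ c + g < θ i x} c g :=
  ⟨fun _ hi => hi.2, fun i hi => by
    by_contra hlt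
    exact h i hi.1 ⟨not_le.1 hlt, not_lt.1 fun h' => hi.2 ⟨hi.1, h'⟩⟩⟩

end LevelPiece

section Product

variable {Y Z : Type*} [PseudoMetricSpace Y] [PseudoMetricSpace Z] {a : ℝ}

noncomputable def prodPlateau (a : ℝ) (w : Set Y × Set Z) (x : Y × Z) : ℝ :=
  min (plateau a w.1 x.1) (plateau a w.2 x.2)

theorem lipschitzWith_prodPlateau (a : ℝ) (w : Set Y × Set Z) :
    LipschitzWith 1 (prodPlateau a w) := by
  have := ((lipschitzWith_plateau a w.1).comp LipschitzWith.prod_fst).min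
    ((lipschitzWith_plateau a w.2).comp LipschitzWith.prod_snd)
  rwa [max_self, mul_one] at this

theorem prodPlateau_image_subset (𝒰 : Set (Set Y)) (𝒱 : Set (Set Z)) (x : Y × Z) :
    (prodPlateau a · x) '' (𝒰 ×ˢ 𝒱) ⊆ (plateau a · x.1) '' 𝒰 ∪ (plateau a · x.2) '' 𝒱 := by
  rintro _ ⟨w, ⟨hu, hv⟩, rfl⟩
  rcases min_choice (plateau a w.1 x.1) (plateau a w.2 x.2) with h | h
  · exact .inl ⟨w.1, hu, h.symm⟩
  · exact .inr ⟨w.2, hv, h.symm⟩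

theorem dist_le_of_prodPlateau_pos {U : Set Y} {V : Set Z} {BY BZ : ℝ} (hU : U.Nonempty)
    (hV : V.Nonempty) (hBY : ∀ p ∈ U, ∀ p' ∈ U, dist p p' ≤ BY)
    (hBZ : ∀ q ∈ V, ∀ q' ∈ V, dist q q' ≤ BZ) {x x' : Y × Z}
    (hx : 0 < prodPlateau a (U, V) x) (hx' : 0 < prodPlateau a (U, V) x') :
    dist x x' ≤ max BY BZ + 2 * a := by
  simp only [prodPlateau, lt_min_iff] at hx hx'
  rw [Prod.dist_eq]
  exact max_le_max (dist_le_of_plateau_pos hU hBY hx.1 hx'.1)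
    (dist_le_of_plateau_pos hV hBZ hx.2 hx'.2) |>.trans (by rw [max_add_add_right])

theorem exists_disjoint_prodPlateau_values {𝒰 : Set (Set Y)} {𝒱 : Set (Set Z)} {m n : ℕ} {g : ℝ}
    (ha : 0 < a) (hg : 0 ≤ g) {x : Y × Z} {u₀ : Set Y} {v₀ : Set Z} (hu₀ : u₀ ∈ 𝒰)
    (hxu₀ : x.1 ∈ u₀) (hv₀ : v₀ ∈ 𝒱) (hxv₀ : x.2 ∈ v₀)
    (hmultY : {u | u ∈ 𝒰 ∧ ∃ p ∈ u, dist x.1 p < a}.Finite ∧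
      {u | u ∈ 𝒰 ∧ ∃ p ∈ u, dist x.1 p < a}.ncard ≤ m + 1)
    (hmultZ : {v | v ∈ 𝒱 ∧ ∃ q ∈ v, dist x.2 q < a}.Finite ∧
      {v | v ∈ 𝒱 ∧ ∃ q ∈ v, dist x.2 q < a}.ncard ≤ n + 1) :
    ∃ k : Fin (m + n + 1),
      Disjoint ((prodPlateau a · x) '' (𝒰 ×ˢ 𝒱) ∩ Ioo 0 a)
        (Ioc ((k : ℕ) * g) ((k : ℕ) * g + g)) := by
  obtain ⟨hfinY, hcardY⟩ := plateau_image_inter_Ioo_finite_ncard_le ha hu₀ hxu₀ hmultY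
  obtain ⟨hfinZ, hcardZ⟩ := plateau_image_inter_Ioo_finite_ncard_le ha hv₀ hxv₀ hmultZ
  have hS : (prodPlateau a · x) '' (𝒰 ×ˢ 𝒱) ∩ Ioo 0 a ⊆
      ((plateau a · x.1) '' 𝒰 ∩ Ioo 0 a) ∪ ((plateau a · x.2) '' 𝒱 ∩ Ioo 0 a) := by
    rw [← union_inter_distrib_right]
    exact inter_subset_inter_left _ (prodPlateau_image_subset 𝒰 𝒱 x)
  refine exists_disjoint_of_ncard_lt ((hfinY.union hfinZ).subset hS)
    (pairwise_disjoint_Ioc_natCast_mul hg) ?_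
  have := (ncard_le_ncard hS (hfinY.union hfinZ)).trans (ncard_union_le _ _)
  rw [Nat.card_fin]
  omega

theorem AsdimLE.prod {m n : ℕ} (hY : AsdimLE Y m) (hZ : AsdimLE Z n) :
    AsdimLE (Y × Z) (m + n) := by
  refine asdimLE_of_colorings fun R hR => ?_
  set g := 2 * R
  -- large enough that the windows `(k g, (k + 1) g]`, `k ≤ m + n`, lie in `(0, a)`
  set a : ℝ := (m + n + 2) * g
  have hg : 0 < g := by positivity
  have ha : 0 < a := by positivity
  obtain ⟨𝒰, BY, hcovY, hbddY, hmultY⟩ := hY a ha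
  obtain ⟨𝒱, BZ, hcovZ, hbddZ, hmultZ⟩ := hZ a ha
  set P := {u ∈ 𝒰 | u.Nonempty} ×ˢ {v ∈ 𝒱 | v.Nonempty}
  refine ⟨fun k => {W | ∃ σ ⊆ P, σ.Nonempty ∧ W = levelPiece (prodPlateau a) P σ (k * g) g},
    max BY BZ + 2 * a, fun x => ?_, ?_, ?_⟩
  · obtain ⟨u₀, hu₀, hxu₀⟩ := hcovY x.1
    obtain ⟨v₀, hv₀, hxv₀⟩ := hcovZ x.2
    obtain ⟨k, hk⟩ := exists_disjoint_prodPlateau_values ha hg.le hu₀ hxu₀ hv₀ hxv₀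
      (hmultY x.1) (hmultZ x.2)
    have hkg : (k : ℕ) * g + g < a := by
      have : ((k : ℕ) : ℝ) + 1 ≤ m + n + 1 := by exact_mod_cast k.isLt
      nlinarith
    have hw₀ : prodPlateau a (u₀, v₀) x = a := by
      simp [prodPlateau, plateau_of_mem ha.le hxu₀, plateau_of_mem ha.le hxv₀]
    refine ⟨k, _, ⟨{w | w ∈ P ∧ k * g + g < prodPlateau a w x}, fun w hw => hw.1,
      ⟨(u₀, v₀), ⟨⟨hu₀, _, hxu₀⟩, ⟨hv₀, _, hxv₀⟩⟩, by rwa [hw₀]⟩, rfl⟩,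
      mem_levelPiece fun w hw hwk =>
        disjoint_left.1 hk ⟨⟨w, ⟨hw.1.1, hw.2.1⟩, rfl⟩, ?_, ?_⟩ hwk⟩
    · exact lt_of_le_of_lt (by positivity) hwk.1
    · exact hwk.2.trans_lt hkg
  · rintro k _ ⟨σ, hσP, ⟨w, hw⟩, rfl⟩ x hx x' hx'
    obtain ⟨⟨hu, hune⟩, ⟨hv, hvne⟩⟩ := hσP hw
    have hpos : ∀ p ∈ levelPiece (prodPlateau a) P σ (k * g) g, 0 < prodPlateau a w p :=
      fun p hp => lt_trans (by positivity) (hp.1 w hw)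
    exact dist_le_of_prodPlateau_pos hune hvne (hbddY _ hu) (hbddZ _ hv) (hpos x hx) (hpos x' hx')
  · rintro k _ ⟨σ, hσP, -, rfl⟩ _ ⟨σ', hσ'P, -, rfl⟩ hne x hx y hy
    exact (lt_dist_of_mem_levelPiece (lipschitzWith_prodPlateau a) hσP hσ'P
      (fun h => hne (h ▸ rfl)) hx hy).le

end Product

theorem IsQIE.asdimLE {X W : Type*} [PseudoMetricSpace X] [PseudoMetricSpace W] {f : X → W}
    {L C : ℝ} (hf : IsQIE f L C) (hL : 0 < L) {n : ℕ} (h : AsdimLE W n) : AsdimLE X n := by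
  intro R hR
  obtain ⟨𝒲, B, hcov, hbdd, hmult⟩ := h (L * R + |C|) (by positivity)
  refine ⟨(f ⁻¹' ·) '' 𝒲, L * (B + C), fun x => ?_, ?_, fun x => ?_⟩
  · obtain ⟨S, hS, hxS⟩ := hcov (f x)
    exact ⟨f ⁻¹' S, mem_image_of_mem _ hS, hxS⟩
  · rintro _ ⟨S, hS, rfl⟩ x hx x' hx'
    have := (hf x x').1
    have := hbdd S hS _ hx _ hx'
    rw [← div_le_iff₀' hL]
    linarith
  · obtain ⟨hfin, hcard⟩ := hmult (f x)
    have hsub : {u | u ∈ (f ⁻¹' ·) '' 𝒲 ∧ ∃ y ∈ u, dist x y < R} ⊆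
        (f ⁻¹' ·) '' {S | S ∈ 𝒲 ∧ ∃ y ∈ S, dist (f x) y < L * R + |C|} := by
      rintro _ ⟨⟨S, hS, rfl⟩, p, hp, hxp⟩
      refine ⟨S, ⟨hS, f p, hp, ?_⟩, rfl⟩
      nlinarith [(hf x p).2, le_abs_self C]
    exact ⟨(hfin.image _).subset hsub,
      (ncard_le_ncard hsub (hfin.image _)).trans ((ncard_image_le hfin).trans hcard)⟩

theorem asdim_le_of_qie_prod_general {X Y Z : Type*} [MetricSpace X] [MetricSpace Y]
    [MetricSpace Z] (f : X → Y × Z) (L C : ℝ) (hL : 1 ≤ L)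
    (hf : IsQIE f L C) (m n : ℕ) (hY : AsdimLE Y m) (hZ : AsdimLE Z n) :
    AsdimLE X (m + n) :=
  hf.asdimLE (by linarith) (hY.prod hZ)

/-- If `X` quasi-isometrically embeds into a product `Y × Z` (sup metric), then
`asdim X ≤ asdim Y + asdim Z`. -/
theorem asdim_le_of_qie_prod {X Y Z : Type*} [MetricSpace X] [MetricSpace Y]
    [MetricSpace Z] (f : X → Y × Z) (L C : ℝ) (hL : 1 ≤ L) (hC : 0 ≤ C)
    (hf : IsQIE f L C) (m n : ℕ) (hY : AsdimLE Y m) (hZ : AsdimLE Z n) :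
    AsdimLE X (m + n) :=
  asdim_le_of_qie_prod_general f L C hL hf m n hY hZ
end

section
/- Asymptotic dimension is a quasi-isometry invariant: if X and Y are quasi-isometric metric spaces then asdim(X) = asdim(Y). -/
lemma asdim_pullback {X Y : Type*} [PseudoMetricSpace X] [PseudoMetricSpace Y]
    (f : X → Y) (L C : ℝ) (hL : 1 ≤ L) (hC : 0 ≤ C) (hf : IsQIE f L C)
    (n : ℕ) (h : AsdimLE Y n) : AsdimLE X n := by
  intro R hR
  have hL0 : (0:ℝ) < L := lt_of_lt_of_le one_pos hL
  have hR' : 0 < L * R + C := by positivity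
  obtain ⟨𝒰, B, hcov, hdiam, hmult⟩ := h (L * R + C) hR'
  refine ⟨(fun u => f ⁻¹' u) '' 𝒰, L * (B + C), ?_, ?_, ?_⟩
  · intro x
    obtain ⟨u, hu, hx⟩ := hcov (f x)
    exact ⟨f ⁻¹' u, ⟨u, hu, rfl⟩, hx⟩
  · rintro v ⟨u, hu, rfl⟩ x hx y hy
    have h1 := (hf x y).1
    have h2 := hdiam u hu (f x) hx (f y) hy
    have h3 : dist x y / L ≤ B + C := by linarith
    have h4 : dist x y ≤ (B + C) * L := (div_le_iff₀ hL0).mp h3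
    nlinarith
  · intro x
    obtain ⟨hfin, hcard⟩ := hmult (f x)
    have hsub : {v | v ∈ (fun u => f ⁻¹' u) '' 𝒰 ∧ ∃ y ∈ v, dist x y < R} ⊆
        (fun u => f ⁻¹' u) '' {u | u ∈ 𝒰 ∧ ∃ y ∈ u, dist (f x) y < L * R + C} := by
      rintro v ⟨⟨u, hu, rfl⟩, y, hy, hdy⟩
      refine ⟨u, ⟨hu, f y, hy, ?_⟩, rfl⟩
      have h2 := (hf x y).2
      nlinarith
    refine ⟨(hfin.image _).subset hsub, ?_⟩
    calc _ ≤ ((fun u => f ⁻¹' u) '' {u | u ∈ 𝒰 ∧ ∃ y ∈ u, dist (f x) y < L * R + C}).ncard :=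
          Set.ncard_le_ncard hsub (hfin.image _)
    _ ≤ _ := Set.ncard_image_le hfin
    _ ≤ n + 1 := hcard

/-- Asymptotic dimension is a quasi-isometry invariant: if `f : X → Y` is an
`(L,C)`-quasi-isometric embedding with `C`-dense image, then `X` and `Y` have the
same asymptotic dimension. -/
theorem asdim_qi_invariant {X Y : Type*} [MetricSpace X] [MetricSpace Y]
    (f : X → Y) (L C : ℝ) (hL : 1 ≤ L) (hC : 0 ≤ C) (hf : IsQIE f L C)
    (hdense : ∀ y : Y, ∃ x : X, dist y (f x) ≤ C) :
    ∀ n : ℕ, AsdimLE X n ↔ AsdimLE Y n := by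
  have hL0 : (0:ℝ) < L := lt_of_lt_of_le one_pos hL
  intro n
  constructor
  · intro hX
    choose g hg using hdense
    have hg' : IsQIE g L (3*L*C) := by
      intro y y'
      have hq := hf (g y) (g y')
      have h1 := hg y
      have h2 := hg y'
      have hb_le : dist (f (g y)) (f (g y')) ≤ dist y y' + 2*C := by
        have t := dist_triangle4 (f (g y)) y y' (f (g y'))
        rw [dist_comm (f (g y)) y] at t
        linarith
      have hb_ge : dist y y' - 2*C ≤ dist (f (g y)) (f (g y')) := by
        have t := dist_triangle4 y (f (g y)) (f (g y')) y'
        rw [dist_comm (f (g y')) y'] at t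
        linarith
      have hL2 : (1:ℝ) ≤ L * L := by nlinarith
      constructor
      · have : dist y y' / L ≤ dist (g y) (g y') + 3*L*C := by
          rw [div_le_iff₀ hL0]
          nlinarith [hq.2]
        linarith
      · have haL : dist (g y) (g y') ≤ (dist (f (g y)) (f (g y')) + C) * L := by
          rw [← div_le_iff₀ hL0]; linarith [hq.1]
        nlinarith
    exact asdim_pullback g L (3*L*C) hL (by positivity) hg' n hX
  · intro hY
    exact asdim_pullback f L C hL hC hf n hY
end

section
/- Euclidean space ℝ^n has asymptotic dimension at most n. -/
open Set

lemma EuclideanSpace.dist_le_sqrt_card_mul {ι : Type*} [Fintype ι] {x y : EuclideanSpace ℝ ι}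
    {B : ℝ} (hB : 0 ≤ B) (h : ∀ i, dist (x i) (y i) ≤ B) :
    dist x y ≤ √(Fintype.card ι) * B := by
  rw [EuclideanSpace.dist_eq]
  calc √(∑ i, dist (x i) (y i) ^ 2) ≤ √(∑ _i : ι, B ^ 2) :=
        Real.sqrt_le_sqrt (Finset.sum_le_sum fun i _ => pow_le_pow_left₀ dist_nonneg (h i) 2)
    _ = √(Fintype.card ι) * B := by simp [Real.sqrt_mul, Real.sqrt_sq hB]

lemma finite_and_ncard_le_of_unique_per_color {α C Z : Type*} [Finite C] (U : C → Z → α)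
    (P : α → Prop) (hU : ∀ c z z', P (U c z) → P (U c z') → U c z = U c z') :
    {u | (∃ c z, u = U c z) ∧ P u}.Finite ∧
      {u | (∃ c z, u = U c z) ∧ P u}.ncard ≤ Nat.card C := by
  set S := {u | (∃ c z, u = U c z) ∧ P u}
  let color : S → C := fun u => u.2.1.choose
  have hinj : Function.Injective color := by
    intro u u' h
    obtain ⟨z, hz⟩ : ∃ z, (u : α) = U (color u) z := u.2.1.choose_spec
    obtain ⟨z', hz'⟩ : ∃ z', (u' : α) = U (color u) z' := h ▸ u'.2.1.choose_spec
    exact Subtype.ext (by rw [hz, hz']; exact hU _ _ _ (hz ▸ u.2.2) (hz' ▸ u'.2.2))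
  refine ⟨finite_coe_iff.mp (Finite.of_injective color hinj), ?_⟩
  rw [← Nat.card_coe_set_eq]
  exact Nat.card_le_card_of_injective color hinj

section floor

variable {K : Type*} [Field K] [LinearOrder K] [IsStrictOrderedRing K] [FloorRing K] {a b : K}

lemma abs_floor_sub_floor_le_one (h : |a - b| < 1) : |⌊a⌋ - ⌊b⌋| ≤ 1 := by
  rw [abs_lt] at h
  have hlt : ⌊a⌋ - ⌊b⌋ < 2 := by
    have : (⌊a⌋ : K) - ⌊b⌋ < 2 := by linarith [Int.floor_le a, Int.sub_one_lt_floor b]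
    exact_mod_cast this
  have hgt : -2 < ⌊a⌋ - ⌊b⌋ := by
    have : -2 < (⌊a⌋ : K) - ⌊b⌋ := by linarith [Int.floor_le b, Int.sub_one_lt_floor a]
    exact_mod_cast this
  rw [abs_le]
  omega

lemma abs_sub_lt_of_abs_floor_sub_floor_lt {m : ℤ} (h : |⌊a⌋ - ⌊b⌋| < m) : |a - b| < m := by
  rw [abs_lt] at h ⊢
  have h₁ : ((-m + 1 : ℤ) : K) ≤ ((⌊a⌋ - ⌊b⌋ : ℤ) : K) := Int.cast_le.mpr (by omega)
  have h₂ : ((⌊a⌋ - ⌊b⌋ : ℤ) : K) ≤ ((m - 1 : ℤ) : K) := Int.cast_le.mpr (by omega)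
  push_cast at h₁ h₂
  constructor <;> linarith [Int.floor_le a, Int.lt_floor_add_one a, Int.floor_le b,
    Int.lt_floor_add_one b]

end floor

/-- The `N` cells `(N + 1) z + j, …, (N + 1) z + j + N - 1`; blocks of colour `j` are separated by
the cells `≡ j + N [ZMOD N + 1]`. -/
def colorBlock (N : ℕ) (j : Fin (N + 1)) (z : ℤ) : Set ℤ :=
  Ico ((N + 1) * z + j) ((N + 1) * z + j + N)

section colorBlock

variable {N : ℕ} {j : Fin (N + 1)}

lemma exists_mem_colorBlock (k : ℤ) (hj : (k - N) % (N + 1) ≠ j) : ∃ z, k ∈ colorBlock N j z := by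
  have hpos : (0 : ℤ) < N + 1 := by positivity
  set q := (k - j) / (N + 1)
  set r := (k - j) % (N + 1)
  have hqr : r + (N + 1) * q = k - j := Int.emod_add_mul_ediv _ _
  have hr0 : 0 ≤ r := Int.emod_nonneg _ hpos.ne'
  have hrN : r < N + 1 := Int.emod_lt_of_pos _ hpos
  have hrne : r ≠ N := by
    intro hr
    apply hj
    rw [show k - N = j + (N + 1) * q by linarith, Int.add_mul_emod_self_left,
      Int.emod_eq_of_lt (by positivity) (by omega)]
  refine ⟨q, ?_, ?_⟩ <;> omega

lemma exists_color_forall_mem_colorBlock {ι : Type*} [Fintype ι] (hN : Fintype.card ι ≤ N)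
    (k : ι → ℤ) : ∃ j : Fin (N + 1), ∀ i, ∃ z, k i ∈ colorBlock N j z := by
  have hpos : (0 : ℤ) < N + 1 := by positivity
  -- `bad i` is the colour whose separating cells contain `k i`.
  let bad : ι → Fin (N + 1) := fun i => ⟨((k i - N) % (N + 1)).toNat, by
    have := Int.emod_lt_of_pos (k i - N) hpos
    have := Int.emod_nonneg (k i - N) hpos.ne'
    omega⟩
  obtain ⟨j, hj⟩ : ∃ j, j ∉ range bad := by
    by_contra! h
    have := Fintype.card_le_of_surjective bad h
    simp only [Fintype.card_fin] at this
    omega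
  refine ⟨j, fun i => exists_mem_colorBlock _ fun h => hj ⟨i, ?_⟩⟩
  ext
  simp [bad, h]

lemma eq_of_mem_colorBlock {z z' k k' : ℤ} (hk : k ∈ colorBlock N j z)
    (hk' : k' ∈ colorBlock N j z') (hkk' : |k - k'| ≤ 1) : z = z' := by
  simp only [colorBlock, mem_Ico] at hk hk'
  rw [abs_le] at hkk'
  rcases lt_trichotomy z z' with h | h | h
  · nlinarith
  · exact h
  · nlinarith

lemma abs_sub_lt_of_mem_colorBlock {z k k' : ℤ} (hk : k ∈ colorBlock N j z)
    (hk' : k' ∈ colorBlock N j z) : |k - k'| < N := by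
  simp only [colorBlock, mem_Ico] at hk hk'
  rw [abs_lt]
  constructor <;> omega

end colorBlock

section colorCell

variable {ι : Type*} [Fintype ι] {s : ℝ} {N : ℕ} {j : Fin (N + 1)}

def colorCell (s : ℝ) (N : ℕ) (j : Fin (N + 1)) (z : ι → ℤ) : Set (EuclideanSpace ℝ ι) :=
  {x | ∀ i, ⌊x i / s⌋ ∈ colorBlock N j (z i)}

lemma exists_mem_colorCell (hN : Fintype.card ι ≤ N) (s : ℝ) (x : EuclideanSpace ℝ ι) :
    ∃ j z, x ∈ colorCell s N j z := by
  obtain ⟨j, hj⟩ := exists_color_forall_mem_colorBlock hN fun i => ⌊x i / s⌋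
  choose z hz using hj
  exact ⟨j, z, hz⟩

lemma dist_le_of_mem_colorCell (hs : 0 < s) {z : ι → ℤ} {x y : EuclideanSpace ℝ ι}
    (hx : x ∈ colorCell s N j z) (hy : y ∈ colorCell s N j z) :
    dist x y ≤ √(Fintype.card ι) * (N * s) := by
  refine EuclideanSpace.dist_le_sqrt_card_mul (by positivity) fun i => ?_
  have := abs_sub_lt_of_abs_floor_sub_floor_lt (abs_sub_lt_of_mem_colorBlock (hx i) (hy i))
  rw [← sub_div, abs_div, abs_of_pos hs, div_lt_iff₀ hs] at this
  exact (Real.dist_eq _ _).trans_le (mod_cast this.le)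

lemma eq_of_mem_colorCell_of_dist_lt (hs : 0 < s) {z z' : ι → ℤ} {x y y' : EuclideanSpace ℝ ι}
    (hy : y ∈ colorCell s N j z) (hy' : y' ∈ colorCell s N j z')
    (hxy : dist x y < s / 2) (hxy' : dist x y' < s / 2) : z = z' := by
  funext i
  refine eq_of_mem_colorBlock (hy i) (hy' i) (abs_floor_sub_floor_le_one ?_)
  rw [← sub_div, abs_div, abs_of_pos hs, div_lt_one hs]
  calc |y i - y' i| = dist (y i) (y' i) := (Real.dist_eq _ _).symm
    _ ≤ dist y y' := PiLp.dist_apply_le y y' i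
    _ ≤ dist x y + dist x y' := dist_triangle_left _ _ _
    _ < s := by linarith

end colorCell

theorem asdimLE_euclideanSpace (ι : Type*) [Fintype ι] :
    AsdimLE (EuclideanSpace ℝ ι) (Fintype.card ι) := by
  intro R hR
  have hs : 0 < 2 * R := by positivity
  refine ⟨{u | ∃ j z, u = colorCell (2 * R) (Fintype.card ι) j z},
    √(Fintype.card ι) * (Fintype.card ι * (2 * R)), fun x => ?_, ?_, fun x => ?_⟩
  · obtain ⟨j, z, hx⟩ := exists_mem_colorCell le_rfl (2 * R) x
    exact ⟨_, ⟨j, z, rfl⟩, hx⟩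
  · rintro _ ⟨j, z, rfl⟩ x hx y hy
    exact dist_le_of_mem_colorCell hs hx hy
  · obtain ⟨hfin, hcard⟩ := finite_and_ncard_le_of_unique_per_color
      (colorCell (2 * R) (Fintype.card ι)) (fun u => ∃ y ∈ u, dist x y < R)
      fun j z z' ⟨y, hy, hxy⟩ ⟨y', hy', hxy'⟩ => by
        rw [eq_of_mem_colorCell_of_dist_lt (x := x) hs hy hy' (by linarith) (by linarith)]
    exact ⟨hfin, hcard.trans_eq (Nat.card_fin _)⟩

/-- Euclidean space `ℝⁿ` has asymptotic dimension at most `n`. -/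
theorem asdim_euclidean (n : ℕ) : AsdimLE (EuclideanSpace ℝ (Fin n)) n := by
  simpa using asdimLE_euclideanSpace (Fin n)
end

section
/- If a metric space X is the union of finitely many subspaces X₁, …, X_k each of asymptotic dimension at most n, and the subspaces satisfy the uniform union condition, then asdim(X) ≤ n. In particular, asdim(X₁ ∪ X₂) ≤ max(asdim(X₁), asdim(X₂)) holds for the finite union theorem for asymptotic dimension. -/
/-- Uniform asymptotic dimension for a family of subspaces of a metric space `X`:
covers can be chosen with a common bound `B` on diameters for each `R`. -/
def FamilyAsdimLEUnif {X : Type*} [MetricSpace X] {ι : Type*}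
    (A : ι → Set X) (n : ℕ) : Prop :=
  ∀ R : ℝ, 0 < R → ∃ B : ℝ, ∀ i : ι, ∃ 𝒰 : Set (Set (A i)),
    (∀ x : A i, ∃ u ∈ 𝒰, x ∈ u) ∧
    (∀ u ∈ 𝒰, ∀ x ∈ u, ∀ y ∈ u, dist x y ≤ B) ∧
    (∀ x : A i, {u | u ∈ 𝒰 ∧ ∃ y ∈ u, dist x y < R}.Finite ∧
      {u | u ∈ 𝒰 ∧ ∃ y ∈ u, dist x y < R}.ncard ≤ n + 1)

section AsdimAux

open Set Metric

variable {X : Type*} [MetricSpace X]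

/-- Auxiliary: a subset `S` of `X` admits, for every scale `r > 0`, a uniformly
bounded cover by subsets of `S` whose `r`-multiplicity at points of `S` is at
most `n + 1`. -/
def GoodCov (S : Set X) (n : ℕ) : Prop :=
  ∀ r : ℝ, 0 < r → ∃ (𝒰 : Set (Set X)) (D : ℝ),
    (∀ u ∈ 𝒰, u ⊆ S) ∧ (∀ x ∈ S, ∃ u ∈ 𝒰, x ∈ u) ∧
    (∀ u ∈ 𝒰, ∀ x ∈ u, ∀ y ∈ u, dist x y ≤ D) ∧
    (∀ x ∈ S, {u | u ∈ 𝒰 ∧ ∃ y ∈ u, dist x y < r}.Finite ∧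
      {u | u ∈ 𝒰 ∧ ∃ y ∈ u, dist x y < r}.ncard ≤ n + 1)

/-- Auxiliary: a subset `S` of `X` admits, for every `d > 0`, a system of `n + 1`
families of uniformly bounded, `d`-disjoint subsets of `S` covering `S`. -/
def ColGood (S : Set X) (n : ℕ) : Prop :=
  ∀ d : ℝ, 0 < d → ∃ (F : Fin (n + 1) → Set (Set X)) (D : ℝ),
    (∀ j, ∀ u ∈ F j, u ⊆ S) ∧
    (∀ x ∈ S, ∃ j, ∃ u ∈ F j, x ∈ u) ∧
    (∀ j, ∀ u ∈ F j, ∀ x ∈ u, ∀ y ∈ u, dist x y ≤ D) ∧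
    (∀ j, ∀ u ∈ F j, ∀ v ∈ F j, u ≠ v → ∀ x ∈ u, ∀ y ∈ v, d ≤ dist x y)

lemma ColGood.toGoodCov {S : Set X} {n : ℕ} (h : ColGood S n) : GoodCov S n := by
  classical
  intro r hr
  obtain ⟨F, D, hsub, hcov, hbd, hdisj⟩ := h (2 * r + 1) (by linarith)
  refine ⟨⋃ j, F j, D, ?_, ?_, ?_, ?_⟩
  · intro u hu
    obtain ⟨j, hj⟩ := Set.mem_iUnion.1 hu
    exact hsub j u hj
  · intro x hx
    obtain ⟨j, u, hu, hxu⟩ := hcov x hx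
    exact ⟨u, Set.mem_iUnion.2 ⟨j, hu⟩, hxu⟩
  · intro u hu
    obtain ⟨j, hj⟩ := Set.mem_iUnion.1 hu
    exact hbd j u hj
  · intro x _
    set M := {u | u ∈ ⋃ j, F j ∧ ∃ y ∈ u, dist x y < r} with hM
    have key : ∀ j, ∀ u ∈ F j, ∀ v ∈ F j,
        (∃ y ∈ u, dist x y < r) → (∃ y ∈ v, dist x y < r) → u = v := by
      intro j u hu v hv ⟨y, hy, hy'⟩ ⟨z, hz, hz'⟩
      by_contra hne
      have h1 := hdisj j u hu v hv hne y hy z hz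
      have h2 : dist y z ≤ dist y x + dist x z := dist_triangle _ _ _
      rw [dist_comm y x] at h2
      linarith
    have hex : ∀ u ∈ M, ∃ j, u ∈ F j := by
      intro u hu
      exact Set.mem_iUnion.1 hu.1
    set c : Set X → Fin (n + 1) := fun u =>
      if h : ∃ j, u ∈ F j then h.choose else 0 with hc
    have hmem : ∀ u ∈ M, u ∈ F (c u) := by
      intro u hu
      have h' : ∃ j, u ∈ F j := hex u hu
      simp only [hc, dif_pos h']
      exact h'.choose_spec
    have hinj : Set.InjOn c M := by
      intro u hu v hv hcv
      exact key (c u) u (hmem u hu) v (hcv ▸ hmem v hv) hu.2 hv.2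
    have hfin : M.Finite := Set.Finite.of_finite_image (Set.toFinite _) hinj
    refine ⟨hfin, ?_⟩
    calc M.ncard = (c '' M).ncard := (Set.ncard_image_of_injOn hinj).symm
      _ ≤ (Set.univ : Set (Fin (n + 1))).ncard :=
          Set.ncard_le_ncard (Set.subset_univ _) Set.finite_univ
      _ = n + 1 := by simp [Set.ncard_univ]

lemma GoodCov.toColGood {S : Set X} {n : ℕ} (h : GoodCov S n) : ColGood S n := by
  classical
  intro d hd
  have hr : (0 : ℝ) < ((n : ℝ) + 2) * d := by positivity
  obtain ⟨𝒰₀, D, hsub, hcov, hbd, hmult⟩ := h (((n : ℝ) + 2) * d) hr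
  set r : ℝ := ((n : ℝ) + 2) * d with hrdef
  set 𝒰 : Set (Set X) := {u | u ∈ 𝒰₀ ∧ u.Nonempty} with h𝒰
  set W : Fin (n + 1) → Set (Set X) → Set X := fun j σ =>
    {x | x ∈ S ∧ (∀ u ∈ σ, infDist x u ≤ ((j : ℕ) + 1) * d) ∧
      ∀ u ∈ 𝒰, u ∉ σ → ((j : ℕ) + 2) * d ≤ infDist x u} with hW
  have hjlt : ∀ j : Fin (n + 1), ((j : ℕ) : ℝ) + 2 ≤ (n : ℝ) + 2 := by
    intro j
    have := j.2
    have : ((j : ℕ) : ℝ) ≤ (n : ℝ) := by exact_mod_cast Nat.lt_succ_iff.mp this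
    linarith
  refine ⟨fun j => (W j) '' {σ | σ ⊆ 𝒰}, D + r, ?_, ?_, ?_, ?_⟩
  · rintro j v ⟨σ, hσ, rfl⟩ x hx
    exact hx.1
  · -- covering
    intro x hx
    obtain ⟨u₀, hu₀0, hxu₀⟩ := hcov x hx
    have hu₀ : u₀ ∈ 𝒰 := ⟨hu₀0, ⟨x, hxu₀⟩⟩
    have hu₀dist : infDist x u₀ = 0 := infDist_zero_of_mem hxu₀
    -- find a good color j
    have hgoodj : ∃ j : Fin (n + 1), ∀ u ∈ 𝒰,
        ¬ (((j : ℕ) + 1) * d < infDist x u ∧ infDist x u < ((j : ℕ) + 2) * d) := by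
      by_contra hno
      push_neg at hno
      choose g hg1 hg2 hg3 using hno
      obtain ⟨hfin, hcard⟩ := hmult x hx
      set M₀ := {u | u ∈ 𝒰₀ ∧ ∃ y ∈ u, dist x y < r} with hM₀
      have hu₀M : u₀ ∈ M₀ := ⟨hu₀0, ⟨x, hxu₀, by simpa using hr⟩⟩
      have hrange : Set.range g ⊆ M₀ \ {u₀} := by
        rintro _ ⟨j, rfl⟩
        have hlt : infDist x (g j) < r := by
          have := hg3 j
          have h2 := hjlt j
          calc infDist x (g j) < (((j : ℕ) : ℝ) + 2) * d := this
            _ ≤ r := by rw [hrdef]; nlinarith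
        have hne : (g j).Nonempty := (hg1 j).2
        obtain ⟨y, hy, hdy⟩ := (infDist_lt_iff hne).1 hlt
        refine ⟨⟨(hg1 j).1, ⟨y, hy, hdy⟩⟩, ?_⟩
        simp only [Set.mem_singleton_iff]
        intro heq
        have := hg2 j
        rw [heq, hu₀dist] at this
        nlinarith [j.2]
      have hginj : Function.Injective g := by
        intro j j' heq
        have h1 := hg2 j
        have h2 := hg3 j
        have h3 := hg2 j'
        have h4 := hg3 j'
        rw [heq] at h1 h2
        have hj1 : ((j : ℕ) : ℝ) < ((j' : ℕ) : ℝ) + 1 := by nlinarith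
        have hj2 : ((j' : ℕ) : ℝ) < ((j : ℕ) : ℝ) + 1 := by nlinarith
        have hj1' : (j : ℕ) < (j' : ℕ) + 1 := by exact_mod_cast hj1
        have hj2' : (j' : ℕ) < (j : ℕ) + 1 := by exact_mod_cast hj2
        exact Fin.ext (by omega)
      have hcard1 : (Set.range g).ncard = n + 1 := by
        rw [← Set.image_univ, Set.ncard_image_of_injOn hginj.injOn]
        simp [Set.ncard_univ]
      have hlt' : (M₀ \ {u₀}).ncard < M₀.ncard :=
        Set.ncard_diff_singleton_lt_of_mem hu₀M hfin
      have hle : (Set.range g).ncard ≤ (M₀ \ {u₀}).ncard :=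
        Set.ncard_le_ncard hrange (hfin.subset Set.diff_subset)
      omega
    obtain ⟨j, hj⟩ := hgoodj
    set σ : Set (Set X) := {u | u ∈ 𝒰 ∧ infDist x u ≤ ((j : ℕ) + 1) * d} with hσ
    refine ⟨j, W j σ, ⟨σ, fun u hu => hu.1, rfl⟩, hx, ?_, ?_⟩
    · intro u hu; exact hu.2
    · intro u hu huσ
      have h1 : ¬ infDist x u ≤ ((j : ℕ) + 1) * d := fun hle => huσ ⟨hu, hle⟩
      push_neg at h1
      have h2 := hj u hu
      push_neg at h2
      exact h2 h1
  · -- bounded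
    rintro j v ⟨σ, hσ, rfl⟩ x hx y hy
    obtain ⟨u₀, hu₀0, hxu₀⟩ := hcov x hx.1
    have hu₀ : u₀ ∈ 𝒰 := ⟨hu₀0, ⟨x, hxu₀⟩⟩
    have hu₀σ : u₀ ∈ σ := by
      by_contra hns
      have := hx.2.2 u₀ hu₀ hns
      rw [infDist_zero_of_mem hxu₀] at this
      nlinarith
    have hy1 : infDist y u₀ ≤ ((j : ℕ) + 1) * d := hy.2.1 u₀ hu₀σ
    have hy2 : infDist y u₀ < r := by
      have := hjlt j
      calc infDist y u₀ ≤ (((j : ℕ) : ℝ) + 1) * d := hy1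
        _ < (((j : ℕ) : ℝ) + 2) * d := by nlinarith
        _ ≤ r := by rw [hrdef]; nlinarith
    obtain ⟨z, hz, hdz⟩ := (infDist_lt_iff ⟨x, hxu₀⟩).1 hy2
    have hxz : dist x z ≤ D := hbd u₀ hu₀0 x hxu₀ z hz
    calc dist x y ≤ dist x z + dist z y := dist_triangle _ _ _
      _ ≤ D + r := by rw [dist_comm z y]; linarith
  · -- disjointness
    rintro j _ ⟨σ, hσ, rfl⟩ _ ⟨τ, hτ, rfl⟩ hne x hx y hy
    have hστ : σ ≠ τ := by rintro rfl; exact hne rfl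
    have hwit : ∃ w, (w ∈ σ ∧ w ∉ τ) ∨ (w ∈ τ ∧ w ∉ σ) := by
      by_contra hcon
      push_neg at hcon
      apply hστ
      ext w
      exact ⟨(hcon w).1, (hcon w).2⟩
    obtain ⟨w, hw | hw⟩ := hwit
    · have h1 : infDist x w ≤ ((j : ℕ) + 1) * d := hx.2.1 w hw.1
      have h2 : ((j : ℕ) + 2) * d ≤ infDist y w := hy.2.2 w (hσ hw.1) hw.2
      have h3 : infDist y w ≤ infDist x w + dist y x := infDist_le_infDist_add_dist
      rw [dist_comm y x] at h3
      linarith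
    · have h1 : infDist y w ≤ ((j : ℕ) + 1) * d := hy.2.1 w hw.1
      have h2 : ((j : ℕ) + 2) * d ≤ infDist x w := hx.2.2 w (hτ hw.1) hw.2
      have h3 : infDist x w ≤ infDist y w + dist x y := infDist_le_infDist_add_dist
      linarith

lemma ColGood.union {Sa Sb : Set X} {n : ℕ} (ha : ColGood Sa n) (hb : ColGood Sb n) :
    ColGood (Sa ∪ Sb) n := by
  classical
  intro d hd
  obtain ⟨G, DB, hGsub, hGcov, hGbd, hGdisj⟩ := hb d hd
  set DB' : ℝ := max DB 0 with hDB'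
  have hDB'0 : 0 ≤ DB' := le_max_right _ _
  have hDBle : DB ≤ DB' := le_max_left _ _
  set R : ℝ := 2 * DB' + 4 * d with hRdef
  have hR0 : 0 < R := by positivity
  obtain ⟨F, DA, hFsub, hFcov, hFbd, hFdisj⟩ := ha R hR0
  set DA' : ℝ := max DA 0 with hDA'
  have hDAle : DA ≤ DA' := le_max_left _ _
  have hDA'0 : 0 ≤ DA' := le_max_right _ _
  set Close : Set X → Set X → Prop := fun V U => ∃ v ∈ V, ∃ u ∈ U, dist v u < d
    with hClose
  set Tilde : Fin (n + 1) → Set X → Set X := fun j U =>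
    U ∪ ⋃₀ {V | V ∈ G j ∧ Close V U} with hTilde
  set H : Fin (n + 1) → Set (Set X) := fun j =>
    (Tilde j) '' (F j) ∪ {V | V ∈ G j ∧ ∀ U ∈ F j, ¬ Close V U} with hH
  have hGbd' : ∀ j, ∀ V ∈ G j, ∀ x ∈ V, ∀ y ∈ V, dist x y ≤ DB' :=
    fun j V hV x hx y hy => le_trans (hGbd j V hV x hx y hy) hDBle
  have hmemT : ∀ j U x, x ∈ Tilde j U ↔
      x ∈ U ∨ ∃ V, V ∈ G j ∧ Close V U ∧ x ∈ V := by
    intro j U x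
    simp only [hTilde, Set.mem_union, Set.mem_sUnion, Set.mem_setOf_eq]
    constructor
    · rintro (h | ⟨V, ⟨h1, h2⟩, h3⟩)
      · exact Or.inl h
      · exact Or.inr ⟨V, h1, h2, h3⟩
    · rintro (h | ⟨V, h1, h2, h3⟩)
      · exact Or.inl h
      · exact Or.inr ⟨V, ⟨h1, h2⟩, h3⟩
  have hnear : ∀ j U, ∀ x ∈ Tilde j U, ∃ u ∈ U, dist x u ≤ DB' + d := by
    intro j U x hx
    rcases (hmemT j U x).1 hx with hxU | ⟨V, hVG, ⟨v, hv, u, hu, hvu⟩, hxV⟩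
    · exact ⟨x, hxU, by simp [dist_self]; positivity⟩
    · refine ⟨u, hu, ?_⟩
      calc dist x u ≤ dist x v + dist v u := dist_triangle _ _ _
        _ ≤ DB' + d := add_le_add (hGbd' j V hVG x hxV v hv) (le_of_lt hvu)
  refine ⟨H, DA' + 2 * (DB' + d), ?_, ?_, ?_, ?_⟩
  · -- subsets
    rintro j v (⟨U, hU, rfl⟩ | hv) x hx
    · rcases (hmemT j U x).1 hx with hxU | ⟨V, hVG, _, hxV⟩
      · exact Or.inl (hFsub j U hU hxU)
      · exact Or.inr (hGsub j V hVG hxV)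
    · exact Or.inr (hGsub j v hv.1 hx)
  · -- covering
    rintro x (hx | hx)
    · obtain ⟨j, U, hU, hxU⟩ := hFcov x hx
      exact ⟨j, Tilde j U, Or.inl ⟨U, hU, rfl⟩, Or.inl hxU⟩
    · obtain ⟨j, V, hV, hxV⟩ := hGcov x hx
      by_cases hfree : ∀ U ∈ F j, ¬ Close V U
      · exact ⟨j, V, Or.inr ⟨hV, hfree⟩, hxV⟩
      · push_neg at hfree
        obtain ⟨U, hU, hcl⟩ := hfree
        refine ⟨j, Tilde j U, Or.inl ⟨U, hU, rfl⟩, ?_⟩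
        exact (hmemT j U x).2 (Or.inr ⟨V, hV, hcl, hxV⟩)
  · -- bounded
    rintro j v (⟨U, hU, rfl⟩ | hv) x hx y hy
    · obtain ⟨u, hu, hxu⟩ := hnear j U x hx
      obtain ⟨u', hu', hyu'⟩ := hnear j U y hy
      have huu' : dist u u' ≤ DA' := le_trans (hFbd j U hU u hu u' hu') hDAle
      calc dist x y ≤ dist x u + dist u u' + dist u' y := dist_triangle4 _ _ _ _
        _ ≤ (DB' + d) + DA' + (DB' + d) := by
            rw [dist_comm u' y]; exact add_le_add (add_le_add hxu huu') hyu'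
        _ = DA' + 2 * (DB' + d) := by ring
    · have := hGbd' j v hv.1 x hx y hy
      nlinarith
  · -- disjointness
    rintro j p hp q hq hne x hx y hy
    rcases hp with ⟨U, hU, rfl⟩ | hp
    · rcases hq with ⟨U', hU', rfl⟩ | hq
      · -- both saturated
        have hUU' : U ≠ U' := by rintro rfl; exact hne rfl
        rcases (hmemT j U x).1 hx with hxU | ⟨V, hVG, hVc, hxV⟩ <;>
          rcases (hmemT j U' y).1 hy with hyU | ⟨V', hV'G, hV'c, hyV⟩
        · have := hFdisj j U hU U' hU' hUU' x hxU y hyU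
          linarith
        · obtain ⟨v', hv', u', hu', hd'⟩ := hV'c
          by_contra hlt
          push_neg at hlt
          have h1 : dist x u' ≤ dist x y + dist y v' + dist v' u' := dist_triangle4 _ _ _ _
          have h2 : dist y v' ≤ DB' := hGbd' j V' hV'G y hyV v' hv'
          have h3 := hFdisj j U hU U' hU' hUU' x hxU u' hu'
          linarith
        · obtain ⟨v, hv, u, hu, hdvu⟩ := hVc
          by_contra hlt
          push_neg at hlt
          have h1 : dist u y ≤ dist u x + dist x y := by
            have := dist_triangle u x y
            linarith
          have h1' : dist u x ≤ dist u v + dist v x := dist_triangle _ _ _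
          have h2 : dist v x ≤ DB' := hGbd' j V hVG v hv x hxV
          have h3 := hFdisj j U hU U' hU' hUU' u hu y hyU
          rw [dist_comm u v] at h1'
          linarith
        · by_cases hVV' : V = V'
          · subst hVV'
            obtain ⟨v, hv, u, hu, hdvu⟩ := hVc
            obtain ⟨v', hv', u', hu', hd'⟩ := hV'c
            have h1 : dist u u' ≤ dist u v + dist v v' + dist v' u' := dist_triangle4 _ _ _ _
            have h2 : dist v v' ≤ DB' := hGbd' j V hVG v hv v' hv'
            have h3 := hFdisj j U hU U' hU' hUU' u hu u' hu'
            rw [dist_comm u v] at h1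
            linarith
          · exact hGdisj j V hVG V' hV'G hVV' x hxV y hyV
      · -- saturated vs free
        rcases (hmemT j U x).1 hx with hxU | ⟨V, hVG, hVc, hxV⟩
        · by_contra hlt
          push_neg at hlt
          exact hq.2 U hU ⟨y, hy, x, hxU, by rw [dist_comm y x]; linarith⟩
        · have hVq : V ≠ q := by
            rintro rfl
            exact hq.2 U hU hVc
          exact hGdisj j V hVG q hq.1 hVq x hxV y hy
    · rcases hq with ⟨U', hU', rfl⟩ | hq
      · -- free vs saturated
        rcases (hmemT j U' y).1 hy with hyU | ⟨V', hV'G, hV'c, hyV⟩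
        · by_contra hlt
          push_neg at hlt
          exact hp.2 U' hU' ⟨x, hx, y, hyU, by linarith⟩
        · have hpV' : p ≠ V' := by
            rintro rfl
            exact hp.2 U' hU' hV'c
          exact hGdisj j p hp.1 V' hV'G hpV' x hx y hyV
      · -- both free
        exact hGdisj j p hp.1 q hq.1 hne x hx y hy

lemma asdimLE_subtype_toGoodCov {s : Set X} {n : ℕ} (h : AsdimLE s n) :
    GoodCov s n := by
  classical
  intro r hr
  obtain ⟨𝒰₀, B, hcov, hbd, hmult⟩ := h r hr
  set e : Set s → Set X := fun u => ((↑) : s → X) '' u with he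
  refine ⟨e '' 𝒰₀, B, ?_, ?_, ?_, ?_⟩
  · rintro _ ⟨u, hu, rfl⟩ _ ⟨y, hy, rfl⟩
    exact y.2
  · intro x hx
    obtain ⟨u, hu, hxu⟩ := hcov ⟨x, hx⟩
    exact ⟨e u, ⟨u, hu, rfl⟩, ⟨⟨x, hx⟩, hxu, rfl⟩⟩
  · rintro _ ⟨u, hu, rfl⟩ _ ⟨a, ha, rfl⟩ _ ⟨b, hb, rfl⟩
    have h3 : dist a b ≤ B := hbd u hu a ha b hb
    rw [Subtype.dist_eq] at h3
    exact h3
  · intro x hx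
    have hinj : Function.Injective e := Set.image_injective.2 Subtype.coe_injective
    have hMeq : {v | v ∈ e '' 𝒰₀ ∧ ∃ y ∈ v, dist x y < r}
        = e '' {u | u ∈ 𝒰₀ ∧ ∃ y ∈ u, dist (⟨x, hx⟩ : s) y < r} := by
      ext v
      constructor
      · rintro ⟨⟨u, hu, rfl⟩, y, hy, hdy⟩
        obtain ⟨y₀, hy₀u, rfl⟩ := hy
        exact ⟨u, ⟨hu, ⟨y₀, hy₀u, by rwa [Subtype.dist_eq]⟩⟩, rfl⟩
      · rintro ⟨u, ⟨hu, y₀, hy₀, hdy⟩, rfl⟩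
        exact ⟨⟨u, hu, rfl⟩, ⟨(y₀ : X), ⟨y₀, hy₀, rfl⟩, by rwa [Subtype.dist_eq] at hdy⟩⟩
    obtain ⟨hf, hc⟩ := hmult ⟨x, hx⟩
    rw [hMeq]
    exact ⟨hf.image e, le_trans (le_of_eq (Set.ncard_image_of_injOn hinj.injOn)) hc⟩

lemma goodCov_empty {n : ℕ} : GoodCov (∅ : Set X) n := by
  intro r hr
  refine ⟨∅, 0, by simp, by simp, by simp, by simp⟩

lemma GoodCov.union {Sa Sb : Set X} {n : ℕ} (ha : GoodCov Sa n) (hb : GoodCov Sb n) :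
    GoodCov (Sa ∪ Sb) n :=
  (ha.toColGood.union hb.toColGood).toGoodCov

end AsdimAux

/-- Finite union theorem for asymptotic dimension: if `X` is the union of finitely
many subspaces, each of asymptotic dimension at most `n`, uniformly, then
`asdim X ≤ n`.  In particular `asdim (A ∪ B) ≤ max (asdim A) (asdim B)`. -/
theorem asdim_finite_union {X : Type*} [MetricSpace X] (k : ℕ)
    (A : Fin k → Set X) (hcover : (⋃ i, A i) = Set.univ) (n : ℕ)
    (hA : ∀ i, AsdimLE (A i) n) (hunif : FamilyAsdimLEUnif A n) :
    AsdimLE X n := by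
  classical
  have hgood : ∀ s : Finset (Fin k), GoodCov (⋃ i ∈ s, A i) n := by
    intro s
    induction s using Finset.induction with
    | empty => simpa using (goodCov_empty (X := X) (n := n))
    | @insert a s ha ih =>
      have heq : (⋃ i ∈ insert a s, A i) = A a ∪ ⋃ i ∈ s, A i := by
        simp [Set.biUnion_insert]
      rw [heq]
      exact (asdimLE_subtype_toGoodCov (hA a)).union ih
  have hXgood : GoodCov (Set.univ : Set X) n := by
    have h1 := hgood Finset.univ
    have h2 : (⋃ i ∈ (Finset.univ : Finset (Fin k)), A i) = Set.univ := by
      rw [← hcover]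
      simp
    rwa [h2] at h1
  intro R hR
  obtain ⟨𝒰, D, _, hcov, hbd, hmult⟩ := hXgood R hR
  exact ⟨𝒰, D, fun x => hcov x trivial, hbd, fun x => hmult x trivial⟩
end

section
/- Let G be a δ-hyperbolic geodesic metric space, H a K-quasi-convex subset, and z a point on a geodesic from x ∈ G to a point of H. There is a constant C = C(δ, K) such that if d(z, H) ≥ C then d(Π_H(x), Π_H(z)) ≤ C. -/
/-- `g` is a (unit-speed) geodesic from `x` to `y`, parametrized on `[0, dist x y]`. -/
def IsGeodesicFromTo {X : Type*} [MetricSpace X] (g : ℝ → X) (x y : X) : Prop :=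
  g 0 = x ∧ g (dist x y) = y ∧
    ∀ s ∈ Set.Icc (0 : ℝ) (dist x y), ∀ t ∈ Set.Icc (0 : ℝ) (dist x y),
      dist (g s) (g t) = |s - t|

/-- `X` is a geodesic metric space. -/
def GeodesicSpace (X : Type*) [MetricSpace X] : Prop :=
  ∀ x y : X, ∃ g : ℝ → X, IsGeodesicFromTo g x y

/-- `X` is `δ`-hyperbolic: every geodesic triangle is `δ`-thin, i.e. each side is
contained in the `δ`-neighborhood of the union of the other two sides. -/
def ThinTriangles (X : Type*) [MetricSpace X] (δ : ℝ) : Prop :=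
  ∀ x y z : X, ∀ g₁ g₂ g₃ : ℝ → X,
    IsGeodesicFromTo g₁ x y → IsGeodesicFromTo g₂ y z → IsGeodesicFromTo g₃ x z →
    ∀ s ∈ Set.Icc (0 : ℝ) (dist x y), ∃ t : ℝ,
      (t ∈ Set.Icc (0 : ℝ) (dist y z) ∧ dist (g₁ s) (g₂ t) ≤ δ) ∨
      (t ∈ Set.Icc (0 : ℝ) (dist x z) ∧ dist (g₁ s) (g₃ t) ≤ δ)

/-- `H` is `K`-quasi-convex: every geodesic between points of `H` stays in the
`K`-neighborhood of `H`. -/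
def QuasiConvexIn {X : Type*} [MetricSpace X] (H : Set X) (K : ℝ) : Prop :=
  ∀ x ∈ H, ∀ y ∈ H, ∀ g : ℝ → X, IsGeodesicFromTo g x y →
    ∀ s ∈ Set.Icc (0 : ℝ) (dist x y), ∃ h ∈ H, dist (g s) h ≤ K

/-- `p` is a nearest-point projection to `H`: it assigns to each `x` a point of `H`
at distance at most `d(x,H) + 1` from `x`. -/
def IsNearestProj {X : Type*} [MetricSpace X] (H : Set X) (p : X → X) : Prop :=
  ∀ x : X, p x ∈ H ∧ dist x (p x) ≤ Metric.infDist x H + 1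

/-- Key lemma: projections are "almost on geodesics": for any `a` and `q ∈ H`,
`d(a, pa) + d(pa, q) ≤ d(a,q) + 2(2δ+K+2)`. -/
lemma lemA {X : Type} [MetricSpace X] {δ K : ℝ} (hδ : 0 ≤ δ) (hK : 0 ≤ K)
    (geo : GeodesicSpace X) (thin : ThinTriangles X δ) {H : Set X}
    (hqc : QuasiConvexIn H K) {p : X → X} (hp : IsNearestProj H p)
    (a : X) {q : X} (hq : q ∈ H) :
    dist a (p a) + dist (p a) q ≤ dist a q + 2 * (2 * δ + K + 2) := by
  set r : ℝ := δ + K + 2 with hr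
  by_cases hle : dist a (p a) ≤ r
  · have h1 : dist (p a) q ≤ dist (p a) a + dist a q := dist_triangle _ _ _
    have h2 : dist (p a) a = dist a (p a) := dist_comm _ _
    linarith
  · push_neg at hle
    obtain ⟨γ', hγ'⟩ := geo a (p a)
    obtain ⟨g₂, hg₂⟩ := geo (p a) q
    obtain ⟨γ, hγ⟩ := geo a q
    have hs₀ : dist a (p a) - r ∈ Set.Icc (0 : ℝ) (dist a (p a)) := by
      constructor <;> [linarith; linarith]
    obtain ⟨t, ht⟩ := thin a (p a) q γ' g₂ γ hγ' hg₂ hγ _ hs₀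
    have h0mem : (0 : ℝ) ∈ Set.Icc (0 : ℝ) (dist a (p a)) :=
      ⟨le_refl _, dist_nonneg⟩
    have hdau : dist a (γ' (dist a (p a) - r)) = dist a (p a) - r := by
      have := hγ'.2.2 0 h0mem _ hs₀
      rw [hγ'.1] at this
      rw [this]
      rw [abs_of_nonpos (by linarith)]
      ring
    rcases ht with ⟨htmem, hdist⟩ | ⟨htmem, hdist⟩
    · -- near side [pa, q]: contradiction with nearest-point property
      exfalso
      obtain ⟨h', hh', hdh'⟩ := hqc (p a) (hp a).1 q hq g₂ hg₂ t htmem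
      have hinf : Metric.infDist a H ≤ dist a h' := Metric.infDist_le_dist_of_mem hh'
      have hchain : dist a h' ≤ dist a (γ' (dist a (p a) - r)) +
          dist (γ' (dist a (p a) - r)) (g₂ t) + dist (g₂ t) h' := by
        calc dist a h' ≤ dist a (g₂ t) + dist (g₂ t) h' := dist_triangle _ _ _
          _ ≤ (dist a (γ' (dist a (p a) - r)) + dist (γ' (dist a (p a) - r)) (g₂ t))
              + dist (g₂ t) h' := by gcongr; exact dist_triangle _ _ _
      have hpa := (hp a).2
      rw [hdau] at hchain
      linarith
    · -- near side [a, q]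
      have hdmem : dist a (p a) ∈ Set.Icc (0 : ℝ) (dist a (p a)) :=
        ⟨dist_nonneg, le_refl _⟩
      have hup : dist (γ' (dist a (p a) - r)) (p a) = r := by
        have := hγ'.2.2 _ hs₀ _ hdmem
        rw [hγ'.2.1] at this
        rw [this, abs_of_nonpos (by linarith)]
        ring
      have h0q : (0 : ℝ) ∈ Set.Icc (0 : ℝ) (dist a q) := ⟨le_refl _, dist_nonneg⟩
      have hdq : dist a q ∈ Set.Icc (0 : ℝ) (dist a q) := ⟨dist_nonneg, le_refl _⟩
      have hwt : dist a (γ t) = t := by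
        have := hγ.2.2 0 h0q t htmem
        rw [hγ.1] at this
        rw [this, abs_of_nonpos (by linarith [htmem.1])]
        ring
      have hwq : dist (γ t) q = dist a q - t := by
        have := hγ.2.2 t htmem _ hdq
        rw [hγ.2.1] at this
        rw [this, abs_of_nonpos (by linarith [htmem.2])]
        ring
      have h1 : dist a (p a) ≤ dist a (γ t) + dist (γ t) (γ' (dist a (p a) - r)) +
          dist (γ' (dist a (p a) - r)) (p a) := by
        calc dist a (p a) ≤ dist a (γ' (dist a (p a) - r)) +
              dist (γ' (dist a (p a) - r)) (p a) := dist_triangle _ _ _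
          _ ≤ (dist a (γ t) + dist (γ t) (γ' (dist a (p a) - r))) +
              dist (γ' (dist a (p a) - r)) (p a) := by gcongr; exact dist_triangle _ _ _
      have h2 : dist (p a) q ≤ dist (p a) (γ' (dist a (p a) - r)) +
          dist (γ' (dist a (p a) - r)) (γ t) + dist (γ t) q := by
        calc dist (p a) q ≤ dist (p a) (γ t) + dist (γ t) q := dist_triangle _ _ _
          _ ≤ (dist (p a) (γ' (dist a (p a) - r)) +
              dist (γ' (dist a (p a) - r)) (γ t)) + dist (γ t) q := by
                gcongr; exact dist_triangle _ _ _
      have e1 : dist (γ t) (γ' (dist a (p a) - r)) = dist (γ' (dist a (p a) - r)) (γ t) :=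
        dist_comm _ _
      have e2 : dist (p a) (γ' (dist a (p a) - r)) = dist (γ' (dist a (p a) - r)) (p a) :=
        dist_comm _ _
      rw [e1] at h1
      rw [e2, hup] at h2
      rw [hwt] at h1
      rw [hwq] at h2
      have hdle : dist (γ' (dist a (p a) - r)) (γ t) ≤ δ := hdist
      rw [hup] at h1
      linarith

/-- The projection to a `K`-quasi-convex subset `H` of a `δ`-hyperbolic geodesic space
is coarsely constant along a geodesic from `x` to a point of `H`, as long as the
geodesic stays far from `H`: there is `C = C(δ,K)` such that if `z` lies on such a
geodesic and `d(z,H) ≥ C`, then `d(Π_H x, Π_H z) ≤ C`. -/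
theorem projection_coarsely_constant (δ K : ℝ) (hδ : 0 ≤ δ) (hK : 0 ≤ K) :
    ∃ C : ℝ, 0 < C ∧ ∀ (X : Type) [MetricSpace X], GeodesicSpace X → ThinTriangles X δ →
      ∀ H : Set X, H.Nonempty → QuasiConvexIn H K →
      ∀ p : X → X, IsNearestProj H p →
      ∀ x : X, ∀ h ∈ H, ∀ g : ℝ → X, IsGeodesicFromTo g x h →
      ∀ s ∈ Set.Icc (0 : ℝ) (dist x h),
        C ≤ Metric.infDist (g s) H → dist (p x) (p (g s)) ≤ C := by
  refine ⟨6 * δ + 2 * K + 6, by linarith, ?_⟩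
  intro X _ geo thin H _ hqc p hp x h hh g hg s hs hfar
  obtain ⟨g₂, hg₂⟩ := geo h (p x)
  obtain ⟨g₃, hg₃⟩ := geo x (p x)
  obtain ⟨t, ht⟩ := thin x h (p x) g g₂ g₃ hg hg₂ hg₃ s hs
  rcases ht with ⟨htmem, hdist⟩ | ⟨htmem, hdist⟩
  · -- g s is near side [h, p x], which is K-close to H: contradiction with hfar
    exfalso
    obtain ⟨h', hh', hdh'⟩ := hqc h hh (p x) (hp x).1 g₂ hg₂ t htmem
    have hinf : Metric.infDist (g s) H ≤ dist (g s) h' := Metric.infDist_le_dist_of_mem hh'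
    have : dist (g s) h' ≤ dist (g s) (g₂ t) + dist (g₂ t) h' := dist_triangle _ _ _
    linarith
  · -- g s is near u = g₃ t on [x, p x]
    have h0₃ : (0 : ℝ) ∈ Set.Icc (0 : ℝ) (dist x (p x)) := ⟨le_refl _, dist_nonneg⟩
    have hd₃ : dist x (p x) ∈ Set.Icc (0 : ℝ) (dist x (p x)) := ⟨dist_nonneg, le_refl _⟩
    have hxu : dist x (g₃ t) = t := by
      have := hg₃.2.2 0 h0₃ t htmem
      rw [hg₃.1] at this
      rw [this, abs_of_nonpos (by linarith [htmem.1])]; ring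
    have hup : dist (g₃ t) (p x) = dist x (p x) - t := by
      have := hg₃.2.2 t htmem _ hd₃
      rw [hg₃.2.1] at this
      rw [this, abs_of_nonpos (by linarith [htmem.2])]; ring
    have hxz : dist x (g s) = s := by
      have h0g : (0 : ℝ) ∈ Set.Icc (0 : ℝ) (dist x h) := ⟨le_refl _, dist_nonneg⟩
      have := hg.2.2 0 h0g s hs
      rw [hg.1] at this
      rw [this, abs_of_nonpos (by linarith [hs.1])]; ring
    -- s ≤ t + δ
    have hst : s ≤ t + δ := by
      have h1 : dist x (g s) ≤ dist x (g₃ t) + dist (g₃ t) (g s) := dist_triangle _ _ _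
      have h2 : dist (g₃ t) (g s) = dist (g s) (g₃ t) := dist_comm _ _
      rw [hxz, hxu, h2] at h1
      linarith
    -- d(g s, p x) ≤ 2δ + d(x, p x) - s
    have hzpx : dist (g s) (p x) ≤ 2 * δ + dist x (p x) - s := by
      have h1 : dist (g s) (p x) ≤ dist (g s) (g₃ t) + dist (g₃ t) (p x) := dist_triangle _ _ _
      rw [hup] at h1
      linarith
    -- lemma A with a = g s, q = p x
    have hA := lemA hδ hK geo thin hqc hp (g s) (hp x).1
    -- d(x, p x) ≤ s + infDist (g s) H + 2
    have hinfz : Metric.infDist (g s) H ≤ dist (g s) (p (g s)) :=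
      Metric.infDist_le_dist_of_mem (hp (g s)).1
    have hinfx : Metric.infDist x H ≤ dist x (p (g s)) :=
      Metric.infDist_le_dist_of_mem (hp (g s)).1
    have hxpz : dist x (p (g s)) ≤ s + dist (g s) (p (g s)) := by
      have := dist_triangle x (g s) (p (g s))
      rw [hxz] at this; linarith
    have hpzH : dist (g s) (p (g s)) ≤ Metric.infDist (g s) H + 1 := (hp (g s)).2
    have hpxx : dist x (p x) ≤ Metric.infDist x H + 1 := (hp x).2
    have hcomm : dist (p x) (p (g s)) = dist (p (g s)) (p x) := dist_comm _ _
    rw [hcomm]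
    linarith
end
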